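/- Let m > 1 and r ≥ 0 be integers. For every natural number n, the number of partitions of n in which every part with even multiplicity has multiplicity less than 2m, and every part with odd multiplicity has multiplicity at least 2r + 1 and at most 2(m + r) − 1, equals the number of partitions of n in which every part is either odd and congruent to 2r + 1 modulo 4r + 2, or even and not congruent to 0 modulo 2m. -/

import Mathlib

/-!
A multiplicity `c` is allowed on the left-hand side exactly when `c = (2r+1)e + 2q` with `e ≤ 1`
and `q < m`. Hence the left-hand partitions are the multisets `(2r+1)•E + 2•Q` (multiplicities
scaled) with `E` a partition into distinct parts and `Q` one in which no part occurs `m` times,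
while the right-hand partitions are the multisets `(2r+1)·O + 2·T` (parts scaled) with `O` a
partition into odd parts and `T` one into parts not divisible by `m`. Both decompositions are
unique, so each side is a sum over `(2r+1)a + 2b = n` of a product of two counts, and Euler's and
Glaisher's theorems identify the factors.
-/

open Finset

namespace Multiset

variable {α : Type*} [DecidableEq α]

noncomputable def mapCount (g : ℕ → ℕ) (hg : g 0 = 0) (s : Multiset α) : Multiset α :=
  Finsupp.toMultiset (s.toFinsupp.mapRange g hg)

@[simp]
lemma count_mapCount (g : ℕ → ℕ) (hg : g 0 = 0) (s : Multiset α) (a : α) :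
    (s.mapCount g hg).count a = g (s.count a) := by
  simp [mapCount]

lemma mem_of_mem_mapCount {g : ℕ → ℕ} {hg : g 0 = 0} {s : Multiset α} {a : α}
    (ha : a ∈ s.mapCount g hg) : a ∈ s := by
  rw [← count_pos, count_mapCount] at ha
  rw [← count_pos]
  by_contra h
  simp_all

end Multiset

lemma Nat.mod_two_mul_eq_self_iff {u p : ℕ} (hu : 0 < u) :
    p % (2 * u) = u ↔ ∃ o, Odd o ∧ p = u * o := by
  constructor
  · intro h
    refine ⟨2 * (p / (2 * u)) + 1, odd_two_mul_add_one _, ?_⟩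
    have := Nat.div_add_mod p (2 * u)
    rw [h] at this
    linarith
  · rintro ⟨o, ⟨k, rfl⟩, rfl⟩
    rw [show u * (2 * k + 1) = u + 2 * u * k by ring, Nat.add_mul_mod_self_left,
      Nat.mod_eq_of_lt (by omega)]

namespace Nat.Partition

def weightedAntidiagonal (u v n : ℕ) : Finset (ℕ × ℕ) :=
  {ab ∈ range (n + 1) ×ˢ range (n + 1) | u * ab.1 + v * ab.2 = n}

lemma mem_weightedAntidiagonal {u v n : ℕ} (hu : 0 < u) (hv : 0 < v) {ab : ℕ × ℕ} :
    ab ∈ weightedAntidiagonal u v n ↔ u * ab.1 + v * ab.2 = n := by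
  simp only [weightedAntidiagonal, mem_filter, mem_product, mem_range, and_iff_right_iff_imp]
  intro h
  constructor <;> nlinarith

theorem card_eq_sum_card_mul_card_of_bijOn {u v : ℕ} (hu : 0 < u) (hv : 0 < v) (n : ℕ)
    {p x y : Multiset ℕ → Prop} {c : Multiset ℕ × Multiset ℕ → Multiset ℕ}
    (hsum : ∀ EQ, (c EQ).sum = u * EQ.1.sum + v * EQ.2.sum)
    (hc : Set.BijOn c
      ({E | (∀ i ∈ E, 0 < i) ∧ x E} ×ˢ {Q | (∀ i ∈ Q, 0 < i) ∧ y Q})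
      {S | (∀ i ∈ S, 0 < i) ∧ p S}) :
    Nat.card {π : n.Partition // p π.parts} =
      ∑ ab ∈ weightedAntidiagonal u v n,
        Nat.card {α : ab.1.Partition // x α.parts} *
          Nat.card {β : ab.2.Partition // y β.parts} := by
  let combine : (Σ ab : weightedAntidiagonal u v n,
      {α : ab.1.1.Partition // x α.parts} × {β : ab.1.2.Partition // y β.parts}) →
      {π : n.Partition // p π.parts} := fun ⟨⟨ab, hab⟩, α, β⟩ =>
    have hmaps := hc.mapsTo ⟨⟨fun _ => α.1.parts_pos, α.2⟩, fun _ => β.1.parts_pos, β.2⟩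
    ⟨⟨c (α.1.parts, β.1.parts), hmaps.1 _, by
      rw [hsum, α.1.parts_sum, β.1.parts_sum, (mem_weightedAntidiagonal hu hv).1 hab]⟩, hmaps.2⟩
  have hbij : Function.Bijective combine := by
    constructor
    · rintro ⟨⟨⟨a, b⟩, hab⟩, ⟨α, hα⟩, ⟨β, hβ⟩⟩ ⟨⟨⟨a', b'⟩, hab'⟩, ⟨α', hα'⟩, ⟨β', hβ'⟩⟩ h
      obtain ⟨hαα', hββ'⟩ : α.parts = α'.parts ∧ β.parts = β'.parts :=
        Prod.ext_iff.1 <| hc.injOn ⟨⟨fun _ => α.parts_pos, hα⟩, fun _ => β.parts_pos, hβ⟩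
          ⟨⟨fun _ => α'.parts_pos, hα'⟩, fun _ => β'.parts_pos, hβ'⟩
          (congrArg (fun π => π.1.parts) h)
      obtain rfl : a = a' := α.parts_sum.symm.trans (hαα' ▸ α'.parts_sum)
      obtain rfl : b = b' := β.parts_sum.symm.trans (hββ' ▸ β'.parts_sum)
      obtain rfl := Nat.Partition.ext hαα'
      obtain rfl := Nat.Partition.ext hββ'
      rfl
    · rintro ⟨π, hπ⟩
      obtain ⟨⟨E, Q⟩, ⟨⟨hE, hxE⟩, hQ, hyQ⟩, hEQ⟩ := hc.surjOn ⟨fun _ => π.parts_pos, hπ⟩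
      have hn : u * E.sum + v * Q.sum = n := by
        rw [← π.parts_sum, ← hEQ, hsum]
      exact ⟨⟨⟨(E.sum, Q.sum), (mem_weightedAntidiagonal hu hv).2 hn⟩,
        ⟨⟨E, hE _, rfl⟩, hxE⟩, ⟨⟨Q, hQ _, rfl⟩, hyQ⟩⟩, Subtype.ext (Nat.Partition.ext hEQ)⟩
  rw [← Nat.card_congr (Equiv.ofBijective combine hbij), Nat.card_sigma,
    ← sum_coe_sort (weightedAntidiagonal u v n)]
  simp only [Nat.card_prod]

lemma natCard_forall_not_even_eq_natCard_nodup (n : ℕ) :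
    Nat.card {π : n.Partition // ∀ i ∈ π.parts, ¬ Even i} =
      Nat.card {π : n.Partition // π.parts.Nodup} := by
  simpa [Nat.card_eq_fintype_card, Fintype.card_subtype, odds, restricted, distincts] using
    card_odds_eq_card_distincts n

lemma natCard_forall_not_dvd_eq_natCard_count_lt (n : ℕ) {m : ℕ} (hm : 0 < m) :
    Nat.card {π : n.Partition // ∀ i ∈ π.parts, ¬ m ∣ i} =
      Nat.card {π : n.Partition // ∀ i ∈ π.parts, π.parts.count i < m} := by
  simpa [Nat.card_eq_fintype_card, Fintype.card_subtype, restricted, countRestricted] using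
    card_restricted_eq_card_countRestricted n hm

end Nat.Partition

namespace Subbarao

variable {m r : ℕ}

lemma mod_two_and_div_two_of_le_one {e : ℕ} (q : ℕ) (he : e ≤ 1) :
    ((2 * r + 1) * e + 2 * q) % 2 = e ∧ ((2 * r + 1) * e + 2 * q) / 2 - r * e = q := by
  interval_cases e <;> simp only [mul_zero, mul_one] <;> omega

lemma parity_bounds_iff_exists_eq_mul_add_two_mul (hm : 0 < m) (c : ℕ) :
    ((Even c → c < 2 * m) ∧ (Odd c → 2 * r + 1 ≤ c ∧ c ≤ 2 * (m + r) - 1)) ↔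
      ∃ e q, e ≤ 1 ∧ q < m ∧ (2 * r + 1) * e + 2 * q = c := by
  simp only [Nat.even_iff, Nat.odd_iff]
  constructor
  · rintro ⟨heven, hodd⟩
    rcases Nat.mod_two_eq_zero_or_one c with h | h
    · exact ⟨0, c / 2, by omega, by omega, by omega⟩
    · exact ⟨1, (c - (2 * r + 1)) / 2, le_rfl, by omega, by omega⟩
  · rintro ⟨e, q, he, hq, rfl⟩
    interval_cases e <;> simp only [mul_zero, mul_one] <;> omega

lemma exists_nsmul_add_nsmul_eq {S : Multiset ℕ}
    (hS : ∀ i, ∃ e q, e ≤ 1 ∧ q < m ∧ (2 * r + 1) * e + 2 * q = S.count i) :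
    ∃ E Q : Multiset ℕ, E.Nodup ∧ (∀ i, Q.count i < m) ∧ (2 * r + 1) • E + 2 • Q = S := by
  refine ⟨S.mapCount (· % 2) rfl, S.mapCount (fun c => c / 2 - r * (c % 2)) (by simp),
    Multiset.nodup_iff_count_le_one.2 fun i => ?_, fun i => ?_, Multiset.ext.2 fun i => ?_⟩
  all_goals
    obtain ⟨e, q, he, hq, hc⟩ := hS i
    obtain ⟨hmod, hdiv⟩ := mod_two_and_div_two_of_le_one (r := r) q he
    simp only [Multiset.count_add, Multiset.count_nsmul, Multiset.count_mapCount, ← hc, hmod, hdiv]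
  exacts [he, hq]

theorem bijOn_nsmul_add_nsmul (hm : 0 < m) :
    Set.BijOn (fun EQ : Multiset ℕ × Multiset ℕ => (2 * r + 1) • EQ.1 + 2 • EQ.2)
      ({E | (∀ i ∈ E, 0 < i) ∧ E.Nodup} ×ˢ {Q | (∀ i ∈ Q, 0 < i) ∧ ∀ i ∈ Q, Q.count i < m})
      {S | (∀ i ∈ S, 0 < i) ∧ ∀ i ∈ S,
        (Even (S.count i) → S.count i < 2 * m) ∧
        (Odd (S.count i) → 2 * r + 1 ≤ S.count i ∧ S.count i ≤ 2 * (m + r) - 1)} := by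
  refine ⟨?mapsTo, ?injOn, ?surjOn⟩
  case mapsTo =>
    rintro ⟨E, Q⟩ ⟨⟨hE, hEnodup⟩, hQ, hQlt⟩
    refine ⟨fun i hi => ?_, fun i _ => (parity_bounds_iff_exists_eq_mul_add_two_mul hm _).2 ?_⟩
    · simp only [Multiset.mem_add, Multiset.mem_nsmul] at hi
      rcases hi with ⟨-, hi⟩ | ⟨-, hi⟩
      exacts [hE i hi, hQ i hi]
    · have hQi : Q.count i < m := by
        by_cases hi : i ∈ Q
        · exact hQlt i hi
        · rwa [Multiset.count_eq_zero_of_notMem hi]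
      refine ⟨E.count i, Q.count i, Multiset.nodup_iff_count_le_one.1 hEnodup i, hQi, ?_⟩
      simp only [Multiset.count_add, Multiset.count_nsmul]
  case injOn =>
    rintro ⟨E, Q⟩ ⟨⟨-, hE⟩, -⟩ ⟨E', Q'⟩ ⟨⟨-, hE'⟩, -⟩ h
    have hcount (i : ℕ) := congrArg (Multiset.count i) h
    simp only [Multiset.count_add, Multiset.count_nsmul] at hcount
    have hEE' : E = E' := Multiset.ext.2 fun i => by
      rw [← (mod_two_and_div_two_of_le_one (r := r) (Q.count i)
          (Multiset.nodup_iff_count_le_one.1 hE i)).1, hcount i,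
        (mod_two_and_div_two_of_le_one (Q'.count i)
          (Multiset.nodup_iff_count_le_one.1 hE' i)).1]
    subst hEE'
    exact Prod.ext rfl (Multiset.ext.2 fun i => by have := hcount i; dsimp only at this ⊢; omega)
  case surjOn =>
    rintro S ⟨hS, hadm⟩
    obtain ⟨E, Q, hE, hQ, rfl⟩ := exists_nsmul_add_nsmul_eq (r := r) fun i => by
      by_cases hi : i ∈ S
      · exact (parity_bounds_iff_exists_eq_mul_add_two_mul hm _).1 (hadm i hi)
      · exact ⟨0, 0, zero_le_one, hm, by simp [Multiset.count_eq_zero_of_notMem hi]⟩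
    exact ⟨(E, Q), ⟨⟨fun i hi => hS i (by simp [hi]), hE⟩, fun i hi => hS i (by simp [hi]),
      fun i _ => hQ i⟩, rfl⟩

lemma odd_and_mod_eq_iff {p : ℕ} :
    Odd p ∧ p % (4 * r + 2) = 2 * r + 1 ↔ ∃ o, Odd o ∧ p = (2 * r + 1) * o := by
  rw [show 4 * r + 2 = 2 * (2 * r + 1) by ring, Nat.mod_two_mul_eq_self_iff (by omega)]
  refine ⟨And.right, fun h => ⟨?_, h⟩⟩
  obtain ⟨o, ho, rfl⟩ := h
  exact Nat.odd_mul.2 ⟨odd_two_mul_add_one r, ho⟩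

lemma even_and_mod_ne_zero_iff {p : ℕ} :
    Even p ∧ ¬ p % (2 * m) = 0 ↔ ∃ t, ¬ m ∣ t ∧ p = 2 * t := by
  constructor
  · rintro ⟨⟨t, rfl⟩, h⟩
    rw [← two_mul, Nat.mul_mod_mul_left] at h
    exact ⟨t, fun hdvd => h (by rw [Nat.mod_eq_zero_of_dvd hdvd, mul_zero]), (two_mul t).symm⟩
  · rintro ⟨t, ht, rfl⟩
    rw [Nat.mul_mod_mul_left]
    exact ⟨even_two_mul t, mul_ne_zero two_ne_zero fun h => ht (Nat.dvd_of_mod_eq_zero h)⟩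

lemma filter_map_mul_add_map_two_mul {O T : Multiset ℕ} (hO : ∀ i ∈ O, ¬ Even i) :
    (O.map ((2 * r + 1) * ·) + T.map (2 * ·)).filter Odd = O.map ((2 * r + 1) * ·) ∧
      (O.map ((2 * r + 1) * ·) + T.map (2 * ·)).filter Even = T.map (2 * ·) := by
  have hodd (o : ℕ) (ho : o ∈ O) : Odd ((2 * r + 1) * o) :=
    Nat.odd_mul.2 ⟨odd_two_mul_add_one r, Nat.not_even_iff_odd.1 (hO o ho)⟩
  simp only [Multiset.filter_add]
  constructor
  · rw [Multiset.filter_eq_self.2 (by simpa using hodd), Multiset.filter_eq_nil.2 (by simp),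
      add_zero]
  · rw [Multiset.filter_eq_nil.2 (by simpa using hodd), Multiset.filter_eq_self.2 (by simp),
      zero_add]

lemma exists_map_mul_add_map_two_mul_eq {S : Multiset ℕ}
    (hS : ∀ p ∈ S, (∃ o, Odd o ∧ p = (2 * r + 1) * o) ∨ ∃ t, ¬ m ∣ t ∧ p = 2 * t) :
    ∃ O T : Multiset ℕ, (∀ o ∈ O, Odd o) ∧ (∀ t ∈ T, ¬ m ∣ t) ∧
      O.map ((2 * r + 1) * ·) + T.map (2 * ·) = S := by
  induction S using Multiset.induction_on with
  | empty => exact ⟨0, 0, by simp, by simp, by simp⟩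
  | cons p S ih =>
    obtain ⟨O, T, hO, hT, rfl⟩ := ih fun q hq => hS q (Multiset.mem_cons_of_mem hq)
    rcases hS p (Multiset.mem_cons_self p _) with ⟨o, ho, rfl⟩ | ⟨t, ht, rfl⟩
    · exact ⟨o ::ₘ O, T, Multiset.forall_mem_cons.2 ⟨ho, hO⟩, hT, by simp⟩
    · exact ⟨O, t ::ₘ T, hO, Multiset.forall_mem_cons.2 ⟨ht, hT⟩, by simp⟩

theorem bijOn_map_mul_add_map_mul :
    Set.BijOn (fun OT : Multiset ℕ × Multiset ℕ => OT.1.map ((2 * r + 1) * ·) + OT.2.map (2 * ·))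
      ({O | (∀ i ∈ O, 0 < i) ∧ ∀ i ∈ O, ¬ Even i} ×ˢ {T | (∀ i ∈ T, 0 < i) ∧ ∀ i ∈ T, ¬ m ∣ i})
      {S | (∀ i ∈ S, 0 < i) ∧ ∀ i ∈ S,
        (Odd i ∧ i % (4 * r + 2) = 2 * r + 1) ∨ (Even i ∧ ¬ i % (2 * m) = 0)} := by
  refine ⟨?mapsTo, ?injOn, ?surjOn⟩
  case mapsTo =>
    rintro ⟨O, T⟩ ⟨⟨hOpos, hO⟩, hTpos, hT⟩
    refine ⟨fun i hi => ?_, fun i hi => ?_⟩ <;>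
      simp only [Multiset.mem_add, Multiset.mem_map] at hi <;>
      obtain ⟨o, ho, rfl⟩ | ⟨t, ht, rfl⟩ := hi
    · exact Nat.mul_pos (by omega) (hOpos o ho)
    · exact Nat.mul_pos two_pos (hTpos t ht)
    · exact Or.inl (odd_and_mod_eq_iff.2 ⟨o, Nat.not_even_iff_odd.1 (hO o ho), rfl⟩)
    · exact Or.inr (even_and_mod_ne_zero_iff.2 ⟨t, hT t ht, rfl⟩)
  case injOn =>
    rintro ⟨O, T⟩ ⟨⟨-, hO⟩, -⟩ ⟨O', T'⟩ ⟨⟨-, hO'⟩, -⟩ h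
    obtain ⟨hodd, heven⟩ := filter_map_mul_add_map_two_mul (T := T) hO
    obtain ⟨hodd', heven'⟩ := filter_map_mul_add_map_two_mul (T := T') hO'
    dsimp only at h
    refine Prod.ext (Multiset.map_injective (mul_right_injective₀ (2 * r).succ_ne_zero) ?_)
      (Multiset.map_injective (mul_right_injective₀ two_ne_zero) ?_)
    · rw [← hodd, h, hodd']
    · rw [← heven, h, heven']
  case surjOn =>
    rintro S ⟨-, hgood⟩
    obtain ⟨O, T, hO, hT, rfl⟩ := exists_map_mul_add_map_two_mul_eq fun p hp =>
      (hgood p hp).imp odd_and_mod_eq_iff.1 even_and_mod_ne_zero_iff.1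
    refine ⟨(O, T), ⟨⟨fun o ho => (hO o ho).pos, fun o ho => Nat.not_even_iff_odd.2 (hO o ho)⟩,
      fun t ht => Nat.pos_of_ne_zero ?_, hT⟩, rfl⟩
    rintro rfl
    exact hT 0 ht (dvd_zero m)

end Subbarao

/-- **Subbarao's finitization.** For integers `m > 1` and `r ≥ 0`, the number of partitions
of `n` in which every part with even multiplicity has multiplicity less than `2m` and every
part with odd multiplicity has multiplicity at least `2r + 1` and at most `2(m + r) - 1`,
equals the number of partitions of `n` in which every part is either odd and congruent to
`2r + 1` modulo `4r + 2`, or even and not congruent to `0` modulo `2m`. -/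
theorem subbarao (m r : ℕ) (hm : 1 < m) (n : ℕ) :
    Nat.card {π : n.Partition //
      ∀ i ∈ π.parts,
        (Even (π.parts.count i) → π.parts.count i < 2 * m) ∧
        (Odd (π.parts.count i) →
          2 * r + 1 ≤ π.parts.count i ∧ π.parts.count i ≤ 2 * (m + r) - 1)} =
    Nat.card {π : n.Partition //
      ∀ i ∈ π.parts,
        (Odd i ∧ i % (4 * r + 2) = 2 * r + 1) ∨ (Even i ∧ ¬ i % (2 * m) = 0)} := by
  have hm₀ : 0 < m := by omega
  rw [Nat.Partition.card_eq_sum_card_mul_card_of_bijOn (by omega : 0 < 2 * r + 1) two_pos n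
      (fun EQ => by simp [Multiset.sum_nsmul]) (Subbarao.bijOn_nsmul_add_nsmul hm₀),
    Nat.Partition.card_eq_sum_card_mul_card_of_bijOn (by omega : 0 < 2 * r + 1) two_pos n
      (fun OT => by
        rw [Multiset.sum_add, Multiset.sum_map_mul_left, Multiset.sum_map_mul_left,
          Multiset.map_id', Multiset.map_id']) Subbarao.bijOn_map_mul_add_map_mul]
  refine sum_congr rfl fun ab _ => ?_
  rw [Nat.Partition.natCard_forall_not_even_eq_natCard_nodup,
    Nat.Partition.natCard_forall_not_dvd_eq_natCard_count_lt _ hm₀]
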